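/- Fix N ≥ 1, initial data θ₁⁰,…,θ_N⁰, ω₁⁰,…,ω_N⁰ ∈ ℝ, natural frequencies ν₁,…,ν_N ∈ ℝ, κ > 0, and m > 0. Let θᵢ(m,t) denote the solution of the inertial Kuramoto model with these data, and θᵢ(0,t) the solution of the first-order Kuramoto model with initial data θ₁⁰,…,θ_N⁰. Then for every t ≥ 0, D(Θ(m,t) − Θ(0,t)) = max_{i,j}|(θᵢ(m,t)−θᵢ(0,t)) − (θⱼ(m,t)−θⱼ(0,t))| ≤ [m(D(Ω⁰−V) + 2κ)/√(1+8mκ)] · e^{−t/(2m)} · (e^{√(1+8mκ) t/(2m)} − e^{−√(1+8mκ) t/(2m)}), where D(Ω⁰−V) = max_{i,j}|(ωᵢ⁰−νᵢ) − (ωⱼ⁰−νⱼ)|. -/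

import Mathlib

open Filter Topology MeasureTheory intervalIntegral

noncomputable section

lemma KMaux_int_exp (c : ℝ) (hc : c ≠ 0) (t : ℝ) :
    ∫ σ in (0:ℝ)..t, Real.exp (c*σ) = (Real.exp (c*t) - 1)/c := by
  have h : ∀ x ∈ Set.uIcc (0:ℝ) t, HasDerivAt (fun σ => Real.exp (c*σ)/c) (Real.exp (c*x)) x := by
    intro x _
    have : HasDerivAt (fun σ : ℝ => Real.exp (c*σ)) (Real.exp (c*x) * (c*1)) x :=
      ((hasDerivAt_id x).const_mul c).exp
    have h2 := this.div_const c
    rw [mul_one] at h2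
    simpa [mul_div_assoc, mul_div_cancel_right₀ _ hc] using h2
  rw [intervalIntegral.integral_eq_sub_of_hasDerivAt h
    ((Real.continuous_exp.comp (continuous_const.mul continuous_id)).intervalIntegrable 0 t)]
  simp [sub_div]

lemma KMaux_ftc {g : ℝ → ℝ} (hg : Continuous g) (t : ℝ) :
    HasDerivAt (fun x => ∫ σ in (0:ℝ)..x, g σ) (g t) t :=
  (hg.integral_hasStrictDerivAt 0 t).hasDerivAt

lemma KMaux_abs_sin_sub_sin (a b : ℝ) : |Real.sin a - Real.sin b| ≤ |a - b| := by
  rw [Real.sin_sub_sin]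
  calc |2 * Real.sin ((a-b)/2) * Real.cos ((a+b)/2)|
      = 2 * |Real.sin ((a-b)/2)| * |Real.cos ((a+b)/2)| := by
        rw [abs_mul, abs_mul]; norm_num
    _ ≤ 2 * |(a-b)/2| * 1 :=
        mul_le_mul (mul_le_mul_of_nonneg_left Real.abs_sin_le_abs (by norm_num))
          (Real.abs_cos_le_one _) (abs_nonneg _) (by positivity)
    _ = |a - b| := by
        rw [abs_div, abs_two]; ring

lemma KMaux_cont_sup' {α : Type*} (s : Finset α) (hs : s.Nonempty) (f : α → ℝ → ℝ)
    (hf : ∀ i, Continuous (f i)) : Continuous (fun t => s.sup' hs (fun i => f i t)) := by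
  induction hs using Finset.Nonempty.cons_induction with
  | singleton a => simpa using hf a
  | cons a s ha hs ih =>
      have : (fun t => (Finset.cons a s ha).sup' (Finset.cons_nonempty ha) fun i => f i t)
          = fun t => max (f a t) (s.sup' hs fun i => f i t) := by
        funext t; rw [Finset.sup'_cons]
      rw [this]
      exact (hf a).max ih

lemma KMaux_cont_iSup {N : ℕ} (hN : 0 < N) (f : Fin N → ℝ → ℝ)
    (hf : ∀ i, Continuous (f i)) : Continuous (fun t => ⨆ i, f i t) := by
  haveI : Nonempty (Fin N) := Fin.pos_iff_nonempty.mp hN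
  have h : (fun t => ⨆ i, f i t)
      = fun t => Finset.univ.sup' Finset.univ_nonempty (fun i => f i t) := by
    funext t; rw [Finset.sup'_univ_eq_ciSup]
  rw [h]
  exact KMaux_cont_sup' _ _ f hf

lemma KMaux_alg (m κ C s a b c d E : ℝ) (hm : m ≠ 0) (hs : s ≠ 0)
    (hsm : s - 1 ≠ 0) (hsp : s + 1 ≠ 0)
    (hs2 : s^2 = 1 + 8*m*κ) (hca : E*c = a) (hdb : E*d = b) :
    m*C*(1-E) + 2*κ*( (m*C/s) * ((a-1)/((s-1)/(2*m)) - (b-1)/(-((s+1)/(2*m))))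
      - (m*C/s)*E*((c-1)/((s+1)/(2*m)) - (d-1)/(-((s-1)/(2*m))))) = m*C/s*(a-b) := by
  have hκeq : κ = (s^2-1)/(8*m) := by
    rw [hs2]; field_simp; ring
  subst hκeq
  rw [← hca, ← hdb]
  simp only [div_neg, div_div_eq_mul_div]
  field_simp
  ring

/-- A global smooth solution of the inertial Kuramoto model
`m θ̈ᵢ + θ̇ᵢ = νᵢ + (κ/N) ∑ⱼ sin(θⱼ - θᵢ)` with initial data `θᵢ(0) = θ0 i`,
`θ̇ᵢ(0) = ω0 i`. -/
def IsInertialSol (N : ℕ) (m κ : ℝ) (ν θ0 ω0 : Fin N → ℝ) (θ : Fin N → ℝ → ℝ) : Prop :=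
  (∀ i, ContDiff ℝ (⊤ : ℕ∞) (θ i)) ∧
  (∀ i, θ i 0 = θ0 i) ∧
  (∀ i, deriv (θ i) 0 = ω0 i) ∧
  (∀ i, ∀ t : ℝ, 0 ≤ t →
    m * deriv (deriv (θ i)) t + deriv (θ i) t
      = ν i + (κ / N) * ∑ j, Real.sin (θ j t - θ i t))

/-- A global smooth solution of the first-order Kuramoto model
`θ̇ᵢ = νᵢ + (κ/N) ∑ⱼ sin(θⱼ - θᵢ)` with initial data `θᵢ(0) = θ0 i`. -/
def IsFirstOrderSol (N : ℕ) (κ : ℝ) (ν θ0 : Fin N → ℝ) (θ : Fin N → ℝ → ℝ) : Prop :=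
  (∀ i, ContDiff ℝ (⊤ : ℕ∞) (θ i)) ∧
  (∀ i, θ i 0 = θ0 i) ∧
  (∀ i, ∀ t : ℝ, 0 ≤ t →
    deriv (θ i) t = ν i + (κ / N) * ∑ j, Real.sin (θ j t - θ i t))

set_option maxHeartbeats 4000000

/-- Inequality (B.3): sharpened diameter bound for the zero inertia limit. -/
theorem stmt5 (N : ℕ) (hN : 1 ≤ N) (θ0 ω0 ν : Fin N → ℝ) (κ m : ℝ)
    (hκ : 0 < κ) (hm : 0 < m)
    (θm θz : Fin N → ℝ → ℝ)
    (hθm : IsInertialSol N m κ ν θ0 ω0 θm)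
    (hθz : IsFirstOrderSol N κ ν θ0 θz) :
    ∀ t : ℝ, 0 ≤ t → ∀ i j,
      |(θm i t - θz i t) - (θm j t - θz j t)| ≤
        m * ((⨆ i, ⨆ j, |(ω0 i - ν i) - (ω0 j - ν j)|) + 2 * κ) /
            Real.sqrt (1 + 8 * m * κ) *
          Real.exp (-t / (2 * m)) *
          (Real.exp (Real.sqrt (1 + 8 * m * κ) * t / (2 * m)) -
            Real.exp (-(Real.sqrt (1 + 8 * m * κ) * t / (2 * m)))) := by
  obtain ⟨hsmooth, hm0, hm1, hODEm⟩ := hθm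
  obtain ⟨hzsmooth, hz0, hODEz⟩ := hθz
  haveI : Nonempty (Fin N) := Fin.pos_iff_nonempty.mp hN
  have hm' : m ≠ 0 := ne_of_gt hm
  have hN0 : (N:ℝ) ≠ 0 := Nat.cast_ne_zero.mpr (by omega)
  set s := Real.sqrt (1 + 8 * m * κ) with hs_def
  have h8 : (0:ℝ) ≤ 1 + 8*m*κ := by positivity
  have hs2 : s^2 = 1 + 8*m*κ := Real.sq_sqrt h8
  have hs1 : 1 < s := by
    have : (1:ℝ) < 1 + 8*m*κ := by nlinarith
    nlinarith [Real.sq_sqrt h8, Real.sqrt_nonneg (1+8*m*κ)]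
  have hspos : 0 < s := lt_trans one_pos hs1
  set DΩ := (⨆ i, ⨆ j, |(ω0 i - ν i) - (ω0 j - ν j)|) with hDΩdef
  set C := DΩ + 2 * κ with hCdef
  set g : Fin N → ℝ → ℝ := fun i σ => (κ / N) * ∑ j, Real.sin (θm j σ - θm i σ) with hgdef
  set gz : Fin N → ℝ → ℝ := fun i σ => (κ / N) * ∑ j, Real.sin (θz j σ - θz i σ) with hgzdef
  set Df : ℝ → ℝ := fun σ => ⨆ k, ⨆ l, |(θm k σ - θz k σ) - (θm l σ - θz l σ)| with hDfdef
  set y : ℝ → ℝ := fun τ => m * C / s * Real.exp (-τ / (2 * m)) *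
      (Real.exp (s * τ / (2 * m)) - Real.exp (-(s * τ / (2 * m)))) with hydef
  -- continuity facts
  have hcm : ∀ i, Continuous (θm i) := fun i => (hsmooth i).continuous
  have hcz : ∀ i, Continuous (θz i) := fun i => (hzsmooth i).continuous
  have hDiffm : ∀ i, Differentiable ℝ (θm i) := fun i => (hsmooth i).differentiable (by simp)
  have hDiffz : ∀ i, Differentiable ℝ (θz i) := fun i => (hzsmooth i).differentiable (by simp)
  have hDiffdm : ∀ i, Differentiable ℝ (deriv (θm i)) := by
    intro i
    have hinf : ContDiff ℝ ((⊤:ℕ∞) : WithTop ℕ∞) (θm i) := (hsmooth i).of_le (by simp)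
    exact (contDiff_infty_iff_deriv.mp hinf).2.differentiable (by simp)
  have hgc : ∀ i, Continuous (g i) := by
    intro i
    exact continuous_const.mul (continuous_finset_sum _ fun j _ =>
      Real.continuous_sin.comp ((hcm j).sub (hcm i)))
  have hgzc : ∀ i, Continuous (gz i) := by
    intro i
    exact continuous_const.mul (continuous_finset_sum _ fun j _ =>
      Real.continuous_sin.comp ((hcz j).sub (hcz i)))
  have hDfc : Continuous Df := by
    apply KMaux_cont_iSup hN
    intro k
    apply KMaux_cont_iSup hN
    intro l
    exact (((hcm k).sub (hcz k)).sub ((hcm l).sub (hcz l))).abs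
  have hyc : Continuous y := by
    apply Continuous.mul
    · exact continuous_const.mul (Real.continuous_exp.comp (by fun_prop))
    · exact ((Real.continuous_exp.comp (by fun_prop)).sub (Real.continuous_exp.comp (by fun_prop)))
  -- sup bounds
  have hDf_ge : ∀ k l σ, |(θm k σ - θz k σ) - (θm l σ - θz l σ)| ≤ Df σ := by
    intro k l σ
    have h1 : |(θm k σ - θz k σ) - (θm l σ - θz l σ)|
        ≤ ⨆ l', |(θm k σ - θz k σ) - (θm l' σ - θz l' σ)| :=
      le_ciSup (f := fun l' => |(θm k σ - θz k σ) - (θm l' σ - θz l' σ)|)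
        (Set.Finite.bddAbove (Set.finite_range _)) l
    exact h1.trans (le_ciSup (f := fun k' => ⨆ l', |(θm k' σ - θz k' σ) - (θm l' σ - θz l' σ)|)
      (Set.Finite.bddAbove (Set.finite_range _)) k)
  have hDf0 : ∀ σ, 0 ≤ Df σ := by
    intro σ
    obtain ⟨i0⟩ := (inferInstance : Nonempty (Fin N))
    exact (abs_nonneg _).trans (hDf_ge i0 i0 σ)
  have hDΩ_ge : ∀ i j, |(ω0 i - ν i) - (ω0 j - ν j)| ≤ DΩ := by
    intro i j
    have h1 : |(ω0 i - ν i) - (ω0 j - ν j)| ≤ ⨆ j', |(ω0 i - ν i) - (ω0 j' - ν j')| :=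
      le_ciSup (f := fun j' => |(ω0 i - ν i) - (ω0 j' - ν j')|)
        (Set.Finite.bddAbove (Set.finite_range _)) j
    exact h1.trans (le_ciSup (f := fun i' => ⨆ j', |(ω0 i' - ν i') - (ω0 j' - ν j')|)
      (Set.Finite.bddAbove (Set.finite_range _)) i)
  -- pointwise bounds on couplings
  have hgz_bound : ∀ i σ, |gz i σ| ≤ κ := by
    intro i σ
    simp only [hgzdef]
    rw [abs_mul]
    have h1 : |(κ/(N:ℝ))| = κ/N := abs_of_pos (by positivity)
    rw [h1]
    have h2 : |∑ j, Real.sin (θz j σ - θz i σ)| ≤ (N:ℝ) := by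
      calc |∑ j, Real.sin (θz j σ - θz i σ)| ≤ ∑ j : Fin N, |Real.sin (θz j σ - θz i σ)| :=
            Finset.abs_sum_le_sum_abs _ _
        _ ≤ ∑ _j : Fin N, (1:ℝ) := Finset.sum_le_sum fun j _ => Real.abs_sin_le_one _
        _ = (N:ℝ) := by simp
    calc κ/(N:ℝ) * |∑ j, Real.sin (θz j σ - θz i σ)| ≤ κ/(N:ℝ) * (N:ℝ) := by
          apply mul_le_mul_of_nonneg_left h2 (by positivity)
      _ = κ := by field_simp
  have hggz : ∀ i σ, |g i σ - gz i σ| ≤ κ * Df σ := by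
    intro i σ
    simp only [hgdef, hgzdef]
    rw [← mul_sub, abs_mul, ← Finset.sum_sub_distrib]
    have h1 : |(κ/(N:ℝ))| = κ/N := abs_of_pos (by positivity)
    rw [h1]
    have h2 : |∑ j, (Real.sin (θm j σ - θm i σ) - Real.sin (θz j σ - θz i σ))|
        ≤ (N:ℝ) * Df σ := by
      calc |∑ j, (Real.sin (θm j σ - θm i σ) - Real.sin (θz j σ - θz i σ))|
          ≤ ∑ j : Fin N, |Real.sin (θm j σ - θm i σ) - Real.sin (θz j σ - θz i σ)| :=
            Finset.abs_sum_le_sum_abs _ _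
        _ ≤ ∑ _j : Fin N, Df σ := by
            apply Finset.sum_le_sum
            intro j _
            refine (KMaux_abs_sin_sub_sin _ _).trans ?_
            have : (θm j σ - θm i σ) - (θz j σ - θz i σ)
                = (θm j σ - θz j σ) - (θm i σ - θz i σ) := by ring
            rw [this]
            exact hDf_ge j i σ
        _ = (N:ℝ) * Df σ := by simp [mul_comm]
    calc κ/(N:ℝ) * |∑ j, (Real.sin (θm j σ - θm i σ) - Real.sin (θz j σ - θz i σ))|
        ≤ κ/(N:ℝ) * ((N:ℝ) * Df σ) := by
          apply mul_le_mul_of_nonneg_left h2 (by positivity)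
      _ = κ * Df σ := by field_simp
  -- Duhamel identity for the velocity of the inertial model
  have hIII : ∀ i t, 0 ≤ t → deriv (θm i) t - ν i =
      Real.exp (-(t/m)) * ((ω0 i - ν i) + (1/m) * ∫ σ in (0:ℝ)..t, Real.exp (σ/m) * g i σ) := by
    intro i t ht
    set Q : ℝ → ℝ := fun x => Real.exp (x/m) * (deriv (θm i) x - ν i)
        - (1/m) * ∫ σ in (0:ℝ)..x, Real.exp (σ/m) * g i σ with hQ
    have hgcont : Continuous fun σ => Real.exp (σ/m) * g i σ :=
      (Real.continuous_exp.comp (continuous_id.div_const m)).mul (hgc i)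
    have hQd : ∀ x, 0 ≤ x → HasDerivAt Q 0 x := by
      intro x hx
      have h1 : HasDerivAt (fun y : ℝ => Real.exp (y/m)) (Real.exp (x/m) * (1/m)) x := by
        have := ((hasDerivAt_id x).div_const m).exp
        simpa [one_div] using this
      have h2 : HasDerivAt (deriv (θm i)) (deriv (deriv (θm i)) x) x :=
        (hDiffdm i x).hasDerivAt
      have h3 : HasDerivAt (fun y => ∫ σ in (0:ℝ)..y, Real.exp (σ/m) * g i σ)
          (Real.exp (x/m) * g i x) x := KMaux_ftc hgcont x
      have h4 := (h1.mul (h2.sub_const (ν i))).sub (h3.const_mul (1/m))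
      have hode := hODEm i x hx
      have hodeg : m * deriv (deriv (θm i)) x + deriv (θm i) x = ν i + g i x := by
        rw [hode]
      refine h4.congr_deriv ?_
      linear_combination (Real.exp (x/m) * m⁻¹) * hodeg
        - (Real.exp (x/m) * deriv (deriv (θm i)) x) * mul_inv_cancel₀ hm'
    have hconst : Q t = Q 0 := by
      have hint : ∫ σ in (0:ℝ)..t, (0:ℝ) = Q t - Q 0 := by
        apply intervalIntegral.integral_eq_sub_of_hasDerivAt
        · intro x hx
          rw [Set.uIcc_of_le ht] at hx
          exact hQd x hx.1
        · exact intervalIntegrable_const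
      have : (0:ℝ) = Q t - Q 0 := by simpa using hint
      linarith
    have hQ0 : Q 0 = ω0 i - ν i := by
      simp [hQ, hm1 i]
    rw [hQ0] at hconst
    have hE : Real.exp (-(t/m)) * Real.exp (t/m) = 1 := by
      rw [← Real.exp_add]; simp
    simp only [hQ] at hconst
    linear_combination Real.exp (-(t/m)) * hconst
      - (deriv (θm i) t - ν i) * hE
  -- integrated identity for the phase differences
  have hIV : ∀ i t, 0 ≤ t → θm i t - θz i t =
      m * (1 - Real.exp (-(t/m))) * (ω0 i - ν i)
      + (∫ σ in (0:ℝ)..t, (g i σ - gz i σ))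
      - Real.exp (-(t/m)) * ∫ σ in (0:ℝ)..t, Real.exp (σ/m) * g i σ := by
    intro i t ht
    set Φ : ℝ → ℝ := fun x => (θm i x - θz i x)
        - m * (1 - Real.exp (-(x/m))) * (ω0 i - ν i)
        - (∫ σ in (0:ℝ)..x, (g i σ - gz i σ))
        + Real.exp (-(x/m)) * ∫ σ in (0:ℝ)..x, Real.exp (σ/m) * g i σ with hΦ
    have hgcont : Continuous fun σ => Real.exp (σ/m) * g i σ :=
      (Real.continuous_exp.comp (continuous_id.div_const m)).mul (hgc i)
    have hΦd : ∀ x, 0 ≤ x → HasDerivAt Φ 0 x := by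
      intro x hx
      have hA : HasDerivAt (fun x => θm i x - θz i x)
          (deriv (θm i) x - deriv (θz i) x) x :=
        ((hDiffm i x).hasDerivAt).sub ((hDiffz i x).hasDerivAt)
      have hB : HasDerivAt (fun x : ℝ => Real.exp (-(x/m)))
          (Real.exp (-(x/m)) * (-(1/m))) x := by
        have := (((hasDerivAt_id x).div_const m).neg).exp
        simpa [one_div] using this
      have hB2 : HasDerivAt (fun x : ℝ => m * (1 - Real.exp (-(x/m))) * (ω0 i - ν i))
          (m * (Real.exp (-(x/m)) * (1/m)) * (ω0 i - ν i)) x := by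
        have h0 : HasDerivAt (fun x : ℝ => 1 - Real.exp (-(x/m)))
            (Real.exp (-(x/m)) * (1/m)) x := by
          have := (hasDerivAt_const x (1:ℝ)).sub hB
          simp only [neg_mul, mul_neg, sub_neg_eq_add, zero_add] at this
          exact this
        exact (h0.const_mul m).mul_const _
      have hC1 : HasDerivAt (fun x => ∫ σ in (0:ℝ)..x, (g i σ - gz i σ))
          (g i x - gz i x) x := KMaux_ftc ((hgc i).sub (hgzc i)) x
      have hD : HasDerivAt (fun x => ∫ σ in (0:ℝ)..x, Real.exp (σ/m) * g i σ)
          (Real.exp (x/m) * g i x) x := KMaux_ftc hgcont x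
      have h4 := ((hA.sub hB2).sub hC1).add (hB.mul hD)
      refine h4.congr_deriv ?_
      have hIIIx := hIII i x hx
      have hodez : deriv (θz i) x = ν i + gz i x := by
        rw [hODEz i x hx]
      have hE : Real.exp (-(x/m)) * Real.exp (x/m) = 1 := by
        rw [← Real.exp_add]; simp
      have hmm1 : m * m⁻¹ = 1 := mul_inv_cancel₀ hm'
      linear_combination hIIIx - hodez + (g i x) * hE
        - (Real.exp (-(x/m)) * (ω0 i - ν i)) * hmm1
    have hconst : Φ t = Φ 0 := by
      have hint : ∫ σ in (0:ℝ)..t, (0:ℝ) = Φ t - Φ 0 := by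
        apply intervalIntegral.integral_eq_sub_of_hasDerivAt
        · intro x hx
          rw [Set.uIcc_of_le ht] at hx
          exact hΦd x hx.1
        · exact intervalIntegrable_const
      have : (0:ℝ) = Φ t - Φ 0 := by simpa using hint
      linarith
    have hΦ0 : Φ 0 = 0 := by
      simp [hΦ, hm0 i, hz0 i]
    rw [hΦ0] at hconst
    simp only [hΦ] at hconst
    linarith
  -- continuity of kernels
  have hkerc : Continuous fun σ : ℝ => Real.exp (σ/m) :=
    Real.continuous_exp.comp (continuous_id.div_const m)
  have hkm : ∀ i, Continuous fun σ => Real.exp (σ/m) * g i σ := fun i => hkerc.mul (hgc i)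
  -- the Volterra-type integral inequality for the diameter
  have hV : ∀ t, 0 ≤ t → Df t ≤ m * C * (1 - Real.exp (-(t/m)))
      + 2*κ * ∫ σ in (0:ℝ)..t, (1 - Real.exp ((σ-t)/m)) * Df σ := by
    intro t ht
    have hktc : Continuous fun σ : ℝ => Real.exp ((σ-t)/m) :=
      Real.continuous_exp.comp ((continuous_id.sub continuous_const).div_const m)
    have hker0 : ∀ σ : ℝ, σ ≤ t → 0 ≤ 1 - Real.exp ((σ-t)/m) := by
      intro σ hσ
      have h1 : Real.exp ((σ-t)/m) ≤ 1 := by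
        rw [Real.exp_le_one_iff]
        apply div_nonpos_of_nonpos_of_nonneg <;> linarith
      linarith
    have hker1 : ∀ σ : ℝ, 1 - Real.exp ((σ-t)/m) ≤ 1 := by
      intro σ
      have := Real.exp_pos ((σ-t)/m)
      linarith
    have hEt : Real.exp (-(t/m)) ≤ 1 := by
      rw [Real.exp_le_one_iff]
      apply neg_nonpos_of_nonneg
      positivity
    refine ciSup_le fun i => ciSup_le fun j => ?_
    have hIVi := hIV i t ht
    have hIVj := hIV j t ht
    -- integrability of all integrands
    have hXc : Continuous fun σ => (1 - Real.exp ((σ-t)/m)) *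
        ((g i σ - gz i σ) - (g j σ - gz j σ)) :=
      (continuous_const.sub hktc).mul (((hgc i).sub (hgzc i)).sub ((hgc j).sub (hgzc j)))
    have hYc : Continuous fun σ => Real.exp ((σ-t)/m) * (gz i σ - gz j σ) :=
      hktc.mul ((hgzc i).sub (hgzc j))
    -- the exact integral identity
    have hsplit : (∫ σ in (0:ℝ)..t, (1 - Real.exp ((σ-t)/m)) *
            ((g i σ - gz i σ) - (g j σ - gz j σ)))
          - (∫ σ in (0:ℝ)..t, Real.exp ((σ-t)/m) * (gz i σ - gz j σ))
        = ((∫ σ in (0:ℝ)..t, (g i σ - gz i σ)) - (∫ σ in (0:ℝ)..t, (g j σ - gz j σ)))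
          - Real.exp (-(t/m)) * (∫ σ in (0:ℝ)..t, Real.exp (σ/m) * g i σ)
          + Real.exp (-(t/m)) * (∫ σ in (0:ℝ)..t, Real.exp (σ/m) * g j σ) := by
      rw [← intervalIntegral.integral_sub (hXc.intervalIntegrable 0 t) (hYc.intervalIntegrable 0 t),
        ← intervalIntegral.integral_const_mul, ← intervalIntegral.integral_const_mul,
        ← intervalIntegral.integral_sub (f := fun σ => g i σ - gz i σ) (g := fun σ => g j σ - gz j σ) (((hgc i).sub (hgzc i)).intervalIntegrable 0 t)
          (((hgc j).sub (hgzc j)).intervalIntegrable 0 t),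
        ← intervalIntegral.integral_sub (f := fun σ => (g i σ - gz i σ) - (g j σ - gz j σ))
          (g := fun σ => Real.exp (-(t/m)) * (Real.exp (σ/m) * g i σ))
          ((((hgc i).sub (hgzc i)).sub ((hgc j).sub (hgzc j))).intervalIntegrable 0 t)
          ((continuous_const.mul (hkm i)).intervalIntegrable 0 t),
        ← intervalIntegral.integral_add (f := fun σ => (g i σ - gz i σ) - (g j σ - gz j σ) - Real.exp (-(t/m)) * (Real.exp (σ/m) * g i σ))
          (g := fun σ => Real.exp (-(t/m)) * (Real.exp (σ/m) * g j σ))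
          (((((hgc i).sub (hgzc i)).sub ((hgc j).sub (hgzc j))).sub
            (continuous_const.mul (hkm i))).intervalIntegrable 0 t)
          ((continuous_const.mul (hkm j)).intervalIntegrable 0 t)]
      apply intervalIntegral.integral_congr
      intro σ _
      have he : Real.exp ((σ-t)/m) = Real.exp (-(t/m)) * Real.exp (σ/m) := by
        rw [← Real.exp_add]; congr 1; ring
      simp only [he]
      ring
    have hEq : (θm i t - θz i t) - (θm j t - θz j t)
        = m * (1 - Real.exp (-(t/m))) * ((ω0 i - ν i) - (ω0 j - ν j))
          + ((∫ σ in (0:ℝ)..t, (1 - Real.exp ((σ-t)/m)) *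
                ((g i σ - gz i σ) - (g j σ - gz j σ)))
            - ∫ σ in (0:ℝ)..t, Real.exp ((σ-t)/m) * (gz i σ - gz j σ)) := by
      rw [hIVi, hIVj, hsplit]
      ring
    -- bounds for the three pieces
    have hb1 : |m * (1 - Real.exp (-(t/m))) * ((ω0 i - ν i) - (ω0 j - ν j))|
        ≤ m * (1 - Real.exp (-(t/m))) * DΩ := by
      rw [abs_mul, abs_of_nonneg (by nlinarith : (0:ℝ) ≤ m * (1 - Real.exp (-(t/m))))]
      exact mul_le_mul_of_nonneg_left (hDΩ_ge i j) (by nlinarith)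
    have hb2 : |∫ σ in (0:ℝ)..t, (1 - Real.exp ((σ-t)/m)) *
          ((g i σ - gz i σ) - (g j σ - gz j σ))|
        ≤ 2*κ * ∫ σ in (0:ℝ)..t, (1 - Real.exp ((σ-t)/m)) * Df σ := by
      have step1 := intervalIntegral.abs_integral_le_integral_abs (μ := volume) (f := fun σ =>
        (1 - Real.exp ((σ-t)/m)) * ((g i σ - gz i σ) - (g j σ - gz j σ))) ht
      have step2 : (∫ σ in (0:ℝ)..t, |(1 - Real.exp ((σ-t)/m)) *
            ((g i σ - gz i σ) - (g j σ - gz j σ))|)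
          ≤ ∫ σ in (0:ℝ)..t, 2*κ * ((1 - Real.exp ((σ-t)/m)) * Df σ) := by
        apply intervalIntegral.integral_mono_on ht (hXc.abs.intervalIntegrable 0 t)
          ((continuous_const.mul ((continuous_const.sub hktc).mul hDfc)).intervalIntegrable 0 t)
        intro σ hσ
        rw [abs_mul, abs_of_nonneg (hker0 σ hσ.2)]
        have habs : |(g i σ - gz i σ) - (g j σ - gz j σ)| ≤ 2*κ*Df σ := by
          have := abs_sub (g i σ - gz i σ) (g j σ - gz j σ)
          have h1 := hggz i σ
          have h2 := hggz j σ
          calc |(g i σ - gz i σ) - (g j σ - gz j σ)|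
              ≤ |g i σ - gz i σ| + |g j σ - gz j σ| := abs_sub _ _
            _ ≤ κ * Df σ + κ * Df σ := add_le_add h1 h2
            _ = 2*κ*Df σ := by ring
        calc (1 - Real.exp ((σ-t)/m)) * |(g i σ - gz i σ) - (g j σ - gz j σ)|
            ≤ (1 - Real.exp ((σ-t)/m)) * (2*κ*Df σ) :=
              mul_le_mul_of_nonneg_left habs (hker0 σ hσ.2)
          _ = 2*κ * ((1 - Real.exp ((σ-t)/m)) * Df σ) := by ring
      calc |∫ σ in (0:ℝ)..t, (1 - Real.exp ((σ-t)/m)) *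
            ((g i σ - gz i σ) - (g j σ - gz j σ))|
          ≤ ∫ σ in (0:ℝ)..t, |(1 - Real.exp ((σ-t)/m)) *
            ((g i σ - gz i σ) - (g j σ - gz j σ))| := step1
        _ ≤ ∫ σ in (0:ℝ)..t, 2*κ * ((1 - Real.exp ((σ-t)/m)) * Df σ) := step2
        _ = 2*κ * ∫ σ in (0:ℝ)..t, (1 - Real.exp ((σ-t)/m)) * Df σ :=
            intervalIntegral.integral_const_mul _ _
    have hkint : ∫ σ in (0:ℝ)..t, Real.exp ((σ-t)/m) = m * (1 - Real.exp (-(t/m))) := by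
      have hpt : Set.EqOn (fun σ : ℝ => Real.exp ((σ-t)/m))
          (fun σ : ℝ => Real.exp (-(t/m)) * Real.exp ((1/m)*σ)) (Set.uIcc 0 t) := by
        intro σ _
        simp only
        rw [← Real.exp_add]; congr 1; field_simp; ring
      rw [intervalIntegral.integral_congr hpt, intervalIntegral.integral_const_mul,
        KMaux_int_exp (1/m) (by positivity) t]
      have hE2 : Real.exp (-(t/m)) * Real.exp ((1/m)*t) = 1 := by
        rw [← Real.exp_add]
        rw [show -(t/m) + (1/m)*t = 0 by field_simp; ring]
        exact Real.exp_zero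
      rw [div_div_eq_mul_div, div_one]
      linear_combination m * hE2
    have hb3 : |∫ σ in (0:ℝ)..t, Real.exp ((σ-t)/m) * (gz i σ - gz j σ)|
        ≤ 2*κ * (m * (1 - Real.exp (-(t/m)))) := by
      have step1 := intervalIntegral.abs_integral_le_integral_abs (μ := volume) (f := fun σ =>
        Real.exp ((σ-t)/m) * (gz i σ - gz j σ)) ht
      have step2 : (∫ σ in (0:ℝ)..t, |Real.exp ((σ-t)/m) * (gz i σ - gz j σ)|)
          ≤ ∫ σ in (0:ℝ)..t, Real.exp ((σ-t)/m) * (2*κ) := by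
        apply intervalIntegral.integral_mono_on ht (hYc.abs.intervalIntegrable 0 t)
          ((hktc.mul continuous_const).intervalIntegrable 0 t)
        intro σ _
        rw [abs_mul, abs_of_nonneg (Real.exp_pos _).le]
        apply mul_le_mul_of_nonneg_left _ (Real.exp_pos _).le
        calc |gz i σ - gz j σ| ≤ |gz i σ| + |gz j σ| := abs_sub _ _
          _ ≤ κ + κ := add_le_add (hgz_bound i σ) (hgz_bound j σ)
          _ = 2*κ := by ring
      have step3 : (∫ σ in (0:ℝ)..t, Real.exp ((σ-t)/m) * (2*κ))
          = 2*κ * (m * (1 - Real.exp (-(t/m)))) := by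
        rw [intervalIntegral.integral_mul_const, hkint]; ring
      calc |∫ σ in (0:ℝ)..t, Real.exp ((σ-t)/m) * (gz i σ - gz j σ)|
          ≤ ∫ σ in (0:ℝ)..t, |Real.exp ((σ-t)/m) * (gz i σ - gz j σ)| := step1
        _ ≤ ∫ σ in (0:ℝ)..t, Real.exp ((σ-t)/m) * (2*κ) := step2
        _ = 2*κ * (m * (1 - Real.exp (-(t/m)))) := step3
    rw [hEq]
    calc |m * (1 - Real.exp (-(t/m))) * ((ω0 i - ν i) - (ω0 j - ν j))
          + ((∫ σ in (0:ℝ)..t, (1 - Real.exp ((σ-t)/m)) *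
                ((g i σ - gz i σ) - (g j σ - gz j σ)))
            - ∫ σ in (0:ℝ)..t, Real.exp ((σ-t)/m) * (gz i σ - gz j σ))|
        ≤ |m * (1 - Real.exp (-(t/m))) * ((ω0 i - ν i) - (ω0 j - ν j))|
          + (|∫ σ in (0:ℝ)..t, (1 - Real.exp ((σ-t)/m)) *
                ((g i σ - gz i σ) - (g j σ - gz j σ))|
            + |∫ σ in (0:ℝ)..t, Real.exp ((σ-t)/m) * (gz i σ - gz j σ)|) :=
          (abs_add_le _ _).trans (add_le_add le_rfl (abs_sub _ _))
      _ ≤ m * (1 - Real.exp (-(t/m))) * DΩ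
          + (2*κ * (∫ σ in (0:ℝ)..t, (1 - Real.exp ((σ-t)/m)) * Df σ)
            + 2*κ * (m * (1 - Real.exp (-(t/m))))) :=
          add_le_add hb1 (add_le_add hb2 hb3)
      _ = m * C * (1 - Real.exp (-(t/m)))
          + 2*κ * ∫ σ in (0:ℝ)..t, (1 - Real.exp ((σ-t)/m)) * Df σ := by
          rw [hCdef]; ring
  -- closed-form Volterra identity for the comparison function y
  have hce : ∀ c : ℝ, Continuous fun σ : ℝ => Real.exp (c*σ) :=
    fun c => Real.continuous_exp.comp (continuous_const.mul continuous_id)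
  have hy : ∀ t, 0 ≤ t → m * C * (1 - Real.exp (-(t/m)))
      + 2*κ * (∫ σ in (0:ℝ)..t, (1 - Real.exp ((σ-t)/m)) * y σ) = y t := by
    intro t ht
    set α := (s-1)/(2*m) with hα_def
    set β := (s+1)/(2*m) with hβ_def
    have hsm1 : s - 1 ≠ 0 := sub_ne_zero.mpr (ne_of_gt hs1)
    have hsp1 : s + 1 ≠ 0 := by nlinarith
    have hαpos : 0 < α := by rw [hα_def]; apply div_pos <;> nlinarith
    have hβpos : 0 < β := by rw [hβ_def]; apply div_pos <;> nlinarith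
    have hy_form : ∀ τ : ℝ, y τ = m*C/s * (Real.exp (α*τ) - Real.exp ((-β)*τ)) := by
      intro τ
      simp only [hydef]
      have e1 : Real.exp (α*τ) = Real.exp (-τ/(2*m)) * Real.exp (s*τ/(2*m)) := by
        rw [← Real.exp_add]; congr 1; rw [hα_def]; field_simp; ring
      have e2 : Real.exp ((-β)*τ) = Real.exp (-τ/(2*m)) * Real.exp (-(s*τ/(2*m))) := by
        rw [← Real.exp_add]; congr 1; rw [hβ_def]; field_simp; ring
      rw [e1, e2]; ring
    have hptY : ∀ σ : ℝ, (1 - Real.exp ((σ-t)/m)) * y σ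
        = (m*C/s) * Real.exp (α*σ) - (m*C/s) * Real.exp ((-β)*σ)
          - ((m*C/s) * Real.exp (-(t/m))) * Real.exp (β*σ)
          + ((m*C/s) * Real.exp (-(t/m))) * Real.exp ((-α)*σ) := by
      intro σ
      rw [hy_form σ]
      have e1 : Real.exp ((σ-t)/m) * Real.exp (α*σ) = Real.exp (-(t/m)) * Real.exp (β*σ) := by
        rw [← Real.exp_add, ← Real.exp_add]; congr 1
        rw [hα_def, hβ_def]; field_simp; ring
      have e2 : Real.exp ((σ-t)/m) * Real.exp ((-β)*σ)
          = Real.exp (-(t/m)) * Real.exp ((-α)*σ) := by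
        rw [← Real.exp_add, ← Real.exp_add]; congr 1
        rw [hα_def, hβ_def]; field_simp; ring
      linear_combination (-(m*C/s)) * e1 + (m*C/s) * e2
    have hint : (∫ σ in (0:ℝ)..t, (1 - Real.exp ((σ-t)/m)) * y σ)
        = (m*C/s) * ((Real.exp (α*t) - 1)/α) - (m*C/s) * ((Real.exp ((-β)*t) - 1)/(-β))
          - ((m*C/s) * Real.exp (-(t/m))) * ((Real.exp (β*t) - 1)/β)
          + ((m*C/s) * Real.exp (-(t/m))) * ((Real.exp ((-α)*t) - 1)/(-α)) := by
      rw [intervalIntegral.integral_congr (g := fun σ =>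
        (m*C/s) * Real.exp (α*σ) - (m*C/s) * Real.exp ((-β)*σ)
          - ((m*C/s) * Real.exp (-(t/m))) * Real.exp (β*σ)
          + ((m*C/s) * Real.exp (-(t/m))) * Real.exp ((-α)*σ)) (fun σ _ => hptY σ)]
      rw [intervalIntegral.integral_add (f := fun σ => (m*C/s) * Real.exp (α*σ) - (m*C/s) * Real.exp ((-β)*σ) - ((m*C/s) * Real.exp (-(t/m))) * Real.exp (β*σ))
          (g := fun σ => ((m*C/s) * Real.exp (-(t/m))) * Real.exp ((-α)*σ))
          ((((continuous_const.mul (hce α)).sub (continuous_const.mul (hce (-β)))).sub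
            (continuous_const.mul (hce β))).intervalIntegrable 0 t)
          ((continuous_const.mul (hce (-α))).intervalIntegrable 0 t),
        intervalIntegral.integral_sub (f := fun σ => (m*C/s) * Real.exp (α*σ) - (m*C/s) * Real.exp ((-β)*σ))
          (g := fun σ => ((m*C/s) * Real.exp (-(t/m))) * Real.exp (β*σ))
          (((continuous_const.mul (hce α)).sub (continuous_const.mul (hce (-β)))).intervalIntegrable 0 t)
          ((continuous_const.mul (hce β)).intervalIntegrable 0 t),
        intervalIntegral.integral_sub (f := fun σ => (m*C/s) * Real.exp (α*σ)) (g := fun σ => (m*C/s) * Real.exp ((-β)*σ))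
          ((continuous_const.mul (hce α)).intervalIntegrable 0 t)
          ((continuous_const.mul (hce (-β))).intervalIntegrable 0 t),
        intervalIntegral.integral_const_mul, intervalIntegral.integral_const_mul,
        intervalIntegral.integral_const_mul, intervalIntegral.integral_const_mul,
        KMaux_int_exp α hαpos.ne' t, KMaux_int_exp (-β) (neg_ne_zero.mpr hβpos.ne') t,
        KMaux_int_exp β hβpos.ne' t, KMaux_int_exp (-α) (neg_ne_zero.mpr hαpos.ne') t]
    rw [hint, hy_form t]
    have hca : Real.exp (-(t/m)) * Real.exp (β*t) = Real.exp (α*t) := by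
      rw [← Real.exp_add]; congr 1; rw [hα_def, hβ_def]; field_simp; ring
    have hdb : Real.exp (-(t/m)) * Real.exp ((-α)*t) = Real.exp ((-β)*t) := by
      rw [← Real.exp_add]; congr 1; rw [hα_def, hβ_def]; field_simp; ring
    have halg := KMaux_alg m κ C s (Real.exp (α*t)) (Real.exp ((-β)*t))
      (Real.exp (β*t)) (Real.exp ((-α)*t)) (Real.exp (-(t/m)))
      hm' hspos.ne' hsm1 hsp1 hs2 hca hdb
    rw [hα_def, hβ_def]
    linear_combination halg
  -- Gronwall-type comparison: Df ≤ y on [0, ∞)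
  have hDfy : ∀ t, 0 ≤ t → Df t ≤ y t := by
    set p : ℝ → ℝ := fun σ => max (Df σ - y σ) 0 with hpdef
    set H : ℝ → ℝ := fun τ => ∫ σ in (0:ℝ)..τ, p σ with hHdef
    have hpc : Continuous p := (hDfc.sub hyc).max continuous_const
    have hHd : ∀ x, HasDerivAt H (p x) x := fun x => KMaux_ftc hpc x
    have hHc : Continuous H := by
      rw [continuous_iff_continuousAt]
      exact fun x => (hHd x).continuousAt
    have hH0 : ∀ τ, 0 ≤ τ → 0 ≤ H τ := fun τ hτ =>
      intervalIntegral.integral_nonneg hτ (fun σ _ => le_max_right _ _)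
    have hkey : ∀ t, 0 ≤ t → Df t - y t ≤ 2*κ * H t := by
      intro t ht
      have hktc : Continuous fun σ : ℝ => Real.exp ((σ-t)/m) :=
        Real.continuous_exp.comp ((continuous_id.sub continuous_const).div_const m)
      have h1 := hV t ht
      have h2 := hy t ht
      have h3 : (∫ σ in (0:ℝ)..t, (1 - Real.exp ((σ-t)/m)) * Df σ)
          - (∫ σ in (0:ℝ)..t, (1 - Real.exp ((σ-t)/m)) * y σ) ≤ H t := by
        rw [← intervalIntegral.integral_sub (f := fun σ => (1 - Real.exp ((σ-t)/m)) * Df σ) (g := fun σ => (1 - Real.exp ((σ-t)/m)) * y σ)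
          (((continuous_const.sub hktc).mul hDfc).intervalIntegrable 0 t)
          (((continuous_const.sub hktc).mul hyc).intervalIntegrable 0 t)]
        apply intervalIntegral.integral_mono_on ht
          ((((continuous_const.sub hktc).mul hDfc).sub
            ((continuous_const.sub hktc).mul hyc)).intervalIntegrable 0 t)
          (hpc.intervalIntegrable 0 t)
        intro σ hσ
        show (1 - Real.exp ((σ-t)/m)) * Df σ - (1 - Real.exp ((σ-t)/m)) * y σ ≤ p σ
        have hk1 : Real.exp ((σ-t)/m) ≤ 1 := by
          rw [Real.exp_le_one_iff]
          apply div_nonpos_of_nonpos_of_nonneg <;> linarith [hσ.1, hσ.2]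
        have hk2 : 0 < Real.exp ((σ-t)/m) := Real.exp_pos _
        have hmax1 : Df σ - y σ ≤ p σ := le_max_left _ _
        have hmax0 : 0 ≤ p σ := le_max_right _ _
        rcases le_or_gt (Df σ - y σ) 0 with hc | hc
        · nlinarith
        · nlinarith
      have h5 : Df t - y t ≤ 2*κ * (∫ σ in (0:ℝ)..t, (1 - Real.exp ((σ-t)/m)) * Df σ)
          - 2*κ * (∫ σ in (0:ℝ)..t, (1 - Real.exp ((σ-t)/m)) * y σ) := by
        linarith
      have h6 : 2*κ * ((∫ σ in (0:ℝ)..t, (1 - Real.exp ((σ-t)/m)) * Df σ)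
          - (∫ σ in (0:ℝ)..t, (1 - Real.exp ((σ-t)/m)) * y σ)) ≤ 2*κ * H t :=
        mul_le_mul_of_nonneg_left h3 (by positivity)
      nlinarith
    intro t ht
    set G : ℝ → ℝ := fun τ => Real.exp (-(2*κ*τ)) * H τ with hGdef
    have hGd : ∀ x, HasDerivAt G (Real.exp (-(2*κ*x)) * (p x - 2*κ*H x)) x := by
      intro x
      have h1 : HasDerivAt (fun τ : ℝ => Real.exp (-(2*κ*τ)))
          (Real.exp (-(2*κ*x)) * (-(2*κ))) x := by
        have := (((hasDerivAt_id x).const_mul (2*κ)).neg).exp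
        simpa using this
      have h2 := h1.mul (hHd x)
      refine h2.congr_deriv ?_
      ring
    have hGc : Continuous G :=
      (Real.continuous_exp.comp (continuous_const.mul continuous_id).neg).mul hHc
    have hanti : AntitoneOn G (Set.Ici 0) := by
      apply antitoneOn_of_deriv_nonpos (convex_Ici 0) hGc.continuousOn
        (fun x _ => (hGd x).differentiableAt.differentiableWithinAt)
      intro x hx
      rw [interior_Ici] at hx
      rw [(hGd x).deriv]
      have hx0 : 0 ≤ x := le_of_lt hx
      have hk := hkey x hx0
      have hH0x := hH0 x hx0
      have hmaxle : p x - 2*κ*H x ≤ 0 := by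
        have : p x ≤ 2*κ*H x := max_le hk (by positivity)
        linarith
      calc Real.exp (-(2*κ*x)) * (p x - 2*κ*H x) ≤ Real.exp (-(2*κ*x)) * 0 :=
            mul_le_mul_of_nonneg_left hmaxle (Real.exp_pos _).le
        _ = 0 := by ring
    have hGt : G t ≤ G 0 := hanti Set.self_mem_Ici (Set.mem_Ici.mpr ht) ht
    have hG0 : G 0 = 0 := by simp [hGdef, hHdef]
    have hHt : H t ≤ 0 := by
      rw [hG0] at hGt
      by_contra hcon
      push_neg at hcon
      have hprod := mul_pos (Real.exp_pos (-(2*κ*t))) hcon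
      simp only [hGdef] at hGt
      linarith
    have hk := hkey t ht
    nlinarith [hH0 t ht]
  -- conclusion
  intro t ht i j
  have h1 : |(θm i t - θz i t) - (θm j t - θz j t)| ≤ Df t := hDf_ge i j t
  have h2 := h1.trans (hDfy t ht)
  simp only [hydef] at h2
  exact h2
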